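/- Let α, C, T > 0 and let ψ : [0,T] → ℝ be continuous and nonnegative. If ψ(t) ≤ ψ(0) + (C/Γ(α)) ∫₀ᵗ (t−s)^{α−1} ψ(s) ds for all t ∈ [0,T], then ψ(t) ≤ ψ(0) · E_{α,1}(C t^α) for all t ∈ [0,T], where E_{α,1}(z) = Σ_{k≥0} z^k/Γ(αk+1) is the Mittag-Leffler function. -/

import Mathlib

/-!
Picard iteration. Writing `I^α` for the Riemann–Liouville integral, the hypothesis reads
`ψ ≤ ψ 0 + C • I^α ψ`. The operator `I^α` is monotone and, by the Beta integral, sends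
`t ^ (α * k) / Γ (α * k + 1)` to `t ^ (α * (k + 1)) / Γ (α * (k + 1) + 1)`. Iterating `n` times from
`ψ ≤ M := max ψ` gives `ψ t ≤ ψ 0 * ∑ k < n, (C t^α)^k / Γ(αk+1) + M (C t^α)^n / Γ(αn+1)`, and the
remainder tends to `0` since the Mittag-Leffler series converges: by log-convexity `Γ` grows
faster than any exponential.
-/

open MeasureTheory

/-- Two-parameter Mittag-Leffler function `E_{α,1}`. -/
noncomputable def mittagLeffler (α z : ℝ) : ℝ :=
  ∑' k : ℕ, z ^ k / Real.Gamma (α * k + 1)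

open Real Set Filter Topology

theorem Real.Gamma_mul_rpow_le_Gamma_add {n : ℕ} (hn : 2 ≤ n) {x : ℝ} (hx : 0 < x) :
    Gamma n * ((n : ℝ) - 1) ^ x ≤ Gamma (n + x) := by
  have hn' : (1 : ℝ) < n := by exact_mod_cast hn
  have hlog := BohrMollerup.f_add_nat_ge convexOn_log_Gamma (fun {y} hy => by
    simp only [Function.comp_apply, Gamma_add_one hy.ne',
      log_mul hy.ne' (Gamma_pos_of_pos hy).ne', add_comm]) hn hx
  have hΓn : 0 < Gamma n := Gamma_pos_of_pos (by linarith)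
  have hpow : 0 < ((n : ℝ) - 1) ^ x := rpow_pos_of_pos (by linarith) x
  rwa [← log_le_log_iff (mul_pos hΓn hpow) (Gamma_pos_of_pos (by linarith)),
    log_mul hΓn.ne' hpow.ne', log_rpow (by linarith)]

theorem summable_pow_div_Gamma_mul_add_one {α : ℝ} (hα : 0 < α) (z : ℝ) :
    Summable fun k : ℕ => z ^ k / Gamma (α * k + 1) := by
  obtain ⟨m, hm1, hmz⟩ : ∃ m : ℕ, 1 ≤ m ∧ 2 * |z| ≤ (m : ℝ) ^ α :=
    ((tendsto_natCast_atTop_atTop.eventually_ge_atTop 1).and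
      (((tendsto_rpow_atTop hα).comp tendsto_natCast_atTop_atTop).eventually_ge_atTop _)).exists
  have hm : (0 : ℝ) < m := by exact_mod_cast hm1
  have hmα : 0 < (m : ℝ) ^ α := by positivity
  have hΓm : 0 < Gamma (m + 1) := Gamma_pos_of_pos (by positivity)
  refine Summable.of_norm_bounded_eventually_nat
    (summable_geometric_two.mul_left ((m : ℝ) ^ m / Gamma (m + 1))) ?_
  filter_upwards [(tendsto_natCast_atTop_atTop.const_mul_atTop hα).eventually_gt_atTop (m : ℝ)]
    with k hk
  have hΓ : Gamma (m + 1) * (m : ℝ) ^ (α * k - m) ≤ Gamma (α * k + 1) := by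
    have := Gamma_mul_rpow_le_Gamma_add (n := m + 1) (by omega) (x := α * k - m) (by linarith)
    rwa [Nat.cast_add_one, add_sub_cancel_right, add_right_comm, add_sub_cancel] at this
  have hpow : (m : ℝ) ^ (α * k - m) = ((m : ℝ) ^ α) ^ k / (m : ℝ) ^ m := by
    rw [rpow_sub hm, rpow_mul hm.le, rpow_natCast, rpow_natCast]
  rw [hpow] at hΓ
  have hΓk : 0 < Gamma (α * k + 1) := Gamma_pos_of_pos (by positivity)
  rw [norm_div, norm_pow, norm_eq_abs, norm_of_nonneg hΓk.le, div_le_iff₀ hΓk]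
  calc |z| ^ k ≤ ((m : ℝ) ^ α / 2) ^ k := pow_le_pow_left₀ (abs_nonneg z) (by linarith) k
    _ = (m : ℝ) ^ m / Gamma (m + 1) * (1 / 2) ^ k *
          (Gamma (m + 1) * (((m : ℝ) ^ α) ^ k / (m : ℝ) ^ m)) := by
      field_simp
      ring
    _ ≤ _ := by gcongr

theorem integral_sub_rpow_mul_rpow {u v t : ℝ} (hu : 0 < u) (hv : 0 < v) (ht : 0 < t) :
    ∫ s in (0 : ℝ)..t, (t - s) ^ (v - 1) * s ^ (u - 1) =
      Gamma u * Gamma v / Gamma (u + v) * t ^ (u + v - 1) := by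
  have hcpow : EqOn (fun s : ℝ => (((t - s) ^ (v - 1) * s ^ (u - 1) : ℝ) : ℂ))
      (fun s : ℝ => (s : ℂ) ^ ((u : ℂ) - 1) * ((t : ℂ) - s) ^ ((v : ℂ) - 1)) (uIcc 0 t) := by
    intro s hs
    rw [uIcc_of_le ht.le] at hs
    push_cast [Complex.ofReal_cpow (sub_nonneg.2 hs.2), Complex.ofReal_cpow hs.1]
    ring
  apply Complex.ofReal_injective
  rw [← intervalIntegral.integral_ofReal, intervalIntegral.integral_congr hcpow,
    Complex.betaIntegral_scaled u v ht,
    Complex.betaIntegral_eq_Gamma_mul_div _ _ (by simpa) (by simpa)]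
  push_cast [Complex.ofReal_cpow ht.le, ← Complex.Gamma_ofReal]
  ring

noncomputable def riemannLiouville (α : ℝ) (f : ℝ → ℝ) (t : ℝ) : ℝ :=
  (Gamma α)⁻¹ * ∫ s in (0 : ℝ)..t, (t - s) ^ (α - 1) * f s

section RiemannLiouville

variable {α t : ℝ} {f g : ℝ → ℝ}

theorem intervalIntegrable_sub_rpow_mul (hα : 0 < α) (ht : 0 ≤ t)
    (hf : ContinuousOn f (Icc 0 t)) :
    IntervalIntegrable (fun s => (t - s) ^ (α - 1) * f s) volume 0 t := by
  have hker := (intervalIntegral.intervalIntegrable_rpow' (r := α - 1) (by linarith)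
    (a := 0) (b := t)).comp_sub_left t
  rw [sub_zero, sub_self] at hker
  exact hker.symm.mul_continuousOn (by rwa [uIcc_of_le ht])

theorem riemannLiouville_mono (hα : 0 < α) (ht : 0 ≤ t) (hf : ContinuousOn f (Icc 0 t))
    (hg : ContinuousOn g (Icc 0 t)) (hfg : ∀ s ∈ Icc 0 t, f s ≤ g s) :
    riemannLiouville α f t ≤ riemannLiouville α g t := by
  refine mul_le_mul_of_nonneg_left ?_ (inv_nonneg.2 (Gamma_pos_of_pos hα).le)
  refine intervalIntegral.integral_mono_on ht (intervalIntegrable_sub_rpow_mul hα ht hf)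
    (intervalIntegrable_sub_rpow_mul hα ht hg) fun s hs => ?_
  exact mul_le_mul_of_nonneg_left (hfg s hs) (rpow_nonneg (sub_nonneg.2 hs.2) _)

theorem riemannLiouville_add (hα : 0 < α) (ht : 0 ≤ t) (hf : ContinuousOn f (Icc 0 t))
    (hg : ContinuousOn g (Icc 0 t)) :
    riemannLiouville α (f + g) t = riemannLiouville α f t + riemannLiouville α g t := by
  simp only [riemannLiouville, Pi.add_apply, mul_add]
  rw [← mul_add, intervalIntegral.integral_add (intervalIntegrable_sub_rpow_mul hα ht hf)
    (intervalIntegrable_sub_rpow_mul hα ht hg)]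

theorem riemannLiouville_smul (c : ℝ) :
    riemannLiouville α (c • f) t = c * riemannLiouville α f t := by
  simp only [riemannLiouville, Pi.smul_apply, smul_eq_mul, mul_left_comm _ c,
    intervalIntegral.integral_const_mul]

theorem riemannLiouville_finsetSum {ι : Type*} (s : Finset ι) {f : ι → ℝ → ℝ} (hα : 0 < α)
    (ht : 0 ≤ t) (hf : ∀ i ∈ s, ContinuousOn (f i) (Icc 0 t)) :
    riemannLiouville α (∑ i ∈ s, f i) t = ∑ i ∈ s, riemannLiouville α (f i) t := by
  simp only [riemannLiouville, Finset.sum_apply, Finset.mul_sum]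
  rw [intervalIntegral.integral_finsetSum fun i hi =>
    intervalIntegrable_sub_rpow_mul hα ht (hf i hi),
    Finset.mul_sum]

theorem riemannLiouville_rpow {β : ℝ} (hα : 0 < α) (hβ : 0 ≤ β) (ht : 0 ≤ t) :
    riemannLiouville α (fun s => s ^ β) t = Gamma (β + 1) / Gamma (β + α + 1) * t ^ (β + α) := by
  rcases ht.eq_or_lt with rfl | ht
  · rw [riemannLiouville, intervalIntegral.integral_same, zero_rpow (by linarith)]
    simp
  have hbeta := integral_sub_rpow_mul_rpow (u := β + 1) (by linarith) hα ht
  rw [add_sub_cancel_right, add_right_comm, add_sub_cancel_right] at hbeta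
  rw [riemannLiouville, hbeta]
  field_simp [(Gamma_pos_of_pos hα).ne']

end RiemannLiouville

noncomputable def mittagLefflerTerm (α C : ℝ) (k : ℕ) (t : ℝ) : ℝ :=
  C ^ k / Gamma (α * k + 1) * t ^ (α * k)

/-- The `n`-th Picard iterate `f ↦ a + C • I^α f` started from the constant `b`. -/
noncomputable def gronwallIterate (α C a b : ℝ) (n : ℕ) : ℝ → ℝ :=
  a • ∑ k ∈ Finset.range n, mittagLefflerTerm α C k + b • mittagLefflerTerm α C n

section MittagLefflerTerm

variable {α C t : ℝ}

theorem mittagLefflerTerm_zero : mittagLefflerTerm α C 0 t = 1 := by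
  simp [mittagLefflerTerm]

theorem mittagLefflerTerm_eq (ht : 0 ≤ t) (k : ℕ) :
    mittagLefflerTerm α C k t = (C * t ^ α) ^ k / Gamma (α * k + 1) := by
  rw [mittagLefflerTerm, mul_pow, ← rpow_natCast (t ^ α), ← rpow_mul ht]
  ring

theorem continuous_mittagLefflerTerm (hα : 0 ≤ α) (k : ℕ) :
    Continuous (mittagLefflerTerm α C k) :=
  continuous_const.mul (continuous_rpow_const (by positivity))

theorem mul_riemannLiouville_mittagLefflerTerm (hα : 0 < α) (ht : 0 ≤ t) (k : ℕ) :
    C * riemannLiouville α (mittagLefflerTerm α C k) t = mittagLefflerTerm α C (k + 1) t := by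
  have hk : (0 : ℝ) < α * k + 1 := by positivity
  have hk' : (0 : ℝ) < α * k + α + 1 := by positivity
  rw [show mittagLefflerTerm α C k = (C ^ k / Gamma (α * k + 1)) • fun s => s ^ (α * k) from rfl,
    riemannLiouville_smul, riemannLiouville_rpow hα (by positivity) ht,
    mittagLefflerTerm, Nat.cast_add_one, mul_add_one α, pow_succ]
  field_simp [(Gamma_pos_of_pos hk).ne', (Gamma_pos_of_pos hk').ne']

theorem continuous_sum_mittagLefflerTerm (hα : 0 ≤ α) (n : ℕ) :
    Continuous (∑ k ∈ Finset.range n, mittagLefflerTerm α C k) := by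
  rw [Finset.sum_fn]
  exact continuous_finsetSum _ fun k _ => continuous_mittagLefflerTerm hα k

theorem continuous_gronwallIterate (hα : 0 ≤ α) (a b : ℝ) (n : ℕ) :
    Continuous (gronwallIterate α C a b n) :=
  ((continuous_sum_mittagLefflerTerm hα n).const_smul a).add
    ((continuous_mittagLefflerTerm hα n).const_smul b)

theorem add_mul_riemannLiouville_gronwallIterate (hα : 0 < α) (ht : 0 ≤ t) (a b : ℝ) (n : ℕ) :
    a + C * riemannLiouville α (gronwallIterate α C a b n) t =
      gronwallIterate α C a b (n + 1) t := by
  have hcont (k : ℕ) := (continuous_mittagLefflerTerm (C := C) hα.le k).continuousOn (s := Icc 0 t)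
  have hsum := (continuous_sum_mittagLefflerTerm (C := C) hα.le n).continuousOn (s := Icc 0 t)
  rw [gronwallIterate, riemannLiouville_add hα ht (hsum.const_smul a) ((hcont n).const_smul b),
    riemannLiouville_smul, riemannLiouville_smul,
    riemannLiouville_finsetSum _ hα ht fun k _ => hcont k]
  simp only [gronwallIterate, Pi.add_apply, Pi.smul_apply, Finset.sum_apply, smul_eq_mul,
    Finset.sum_range_succ' _ n, mittagLefflerTerm_zero,
    ← mul_riemannLiouville_mittagLefflerTerm hα ht]
  rw [← Finset.mul_sum]
  ring

end MittagLefflerTerm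

theorem le_gronwallIterate {α C T M : ℝ} {ψ : ℝ → ℝ} (hα : 0 < α) (hC : 0 ≤ C)
    (hψc : ContinuousOn ψ (Icc 0 T)) (hM : ∀ t ∈ Icc 0 T, ψ t ≤ M)
    (h : ∀ t ∈ Icc 0 T, ψ t ≤ ψ 0 + C * riemannLiouville α ψ t) (n : ℕ) :
    ∀ t ∈ Icc 0 T, ψ t ≤ gronwallIterate α C (ψ 0) M n t := by
  induction n with
  | zero =>
    intro t ht
    simpa [gronwallIterate, mittagLefflerTerm_zero] using hM t ht
  | succ n ih =>
    intro t ht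
    have hsub : Icc 0 t ⊆ Icc 0 T := Icc_subset_Icc_right ht.2
    calc ψ t ≤ ψ 0 + C * riemannLiouville α ψ t := h t ht
      _ ≤ ψ 0 + C * riemannLiouville α (gronwallIterate α C (ψ 0) M n) t := by
        gcongr
        exact riemannLiouville_mono hα ht.1 (hψc.mono hsub)
          (continuous_gronwallIterate hα.le _ _ n).continuousOn fun s hs => ih s (hsub hs)
      _ = gronwallIterate α C (ψ 0) M (n + 1) t :=
        add_mul_riemannLiouville_gronwallIterate hα ht.1 _ _ n

theorem tendsto_gronwallIterate {α C t : ℝ} (hα : 0 < α) (ht : 0 ≤ t) (a b : ℝ) :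
    Tendsto (fun n => gronwallIterate α C a b n t) atTop
      (𝓝 (a * mittagLeffler α (C * t ^ α))) := by
  have hs := summable_pow_div_Gamma_mul_add_one hα (C * t ^ α)
  have := (hs.hasSum.tendsto_sum_nat.const_mul a).add (hs.tendsto_atTop_zero.const_mul b)
  rw [mul_zero, add_zero] at this
  simpa only [gronwallIterate, Pi.add_apply, Pi.smul_apply, Finset.sum_apply, smul_eq_mul,
    mittagLefflerTerm_eq ht, mittagLeffler] using this

theorem weakly_singular_gronwall_general (α C T : ℝ) (hα : 0 < α) (hC : 0 < C) (hT : 0 < T)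
    (ψ : ℝ → ℝ) (hψc : ContinuousOn ψ (Set.Icc 0 T))
    (h : ∀ t ∈ Set.Icc (0:ℝ) T,
      ψ t ≤ ψ 0 + (C / Real.Gamma α) * ∫ s in (0:ℝ)..t, (t - s) ^ (α - 1) * ψ s) :
    ∀ t ∈ Set.Icc (0:ℝ) T, ψ t ≤ ψ 0 * mittagLeffler α (C * t ^ α) := by
  obtain ⟨z, -, hz⟩ := isCompact_Icc.exists_isMaxOn (nonempty_Icc.2 hT.le) hψc
  have h' : ∀ t ∈ Icc 0 T, ψ t ≤ ψ 0 + C * riemannLiouville α ψ t := fun t ht =>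
    (h t ht).trans_eq (by rw [riemannLiouville, div_eq_mul_inv, mul_assoc])
  intro t ht
  exact ge_of_tendsto' (tendsto_gronwallIterate hα ht.1 _ _)
    (le_gronwallIterate hα hC.le hψc (fun s hs => hz hs) h' · t ht)

theorem weakly_singular_gronwall (α C T : ℝ) (hα : 0 < α) (hC : 0 < C) (hT : 0 < T)
    (ψ : ℝ → ℝ) (hψc : ContinuousOn ψ (Set.Icc 0 T))
    (hψ0 : ∀ t ∈ Set.Icc (0:ℝ) T, 0 ≤ ψ t)
    (h : ∀ t ∈ Set.Icc (0:ℝ) T,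
      ψ t ≤ ψ 0 + (C / Real.Gamma α) * ∫ s in (0:ℝ)..t, (t - s) ^ (α - 1) * ψ s) :
    ∀ t ∈ Set.Icc (0:ℝ) T, ψ t ≤ ψ 0 * mittagLeffler α (C * t ^ α) :=
  weakly_singular_gronwall_general α C T hα hC hT ψ hψc h
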